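/- arXiv:1610.09929 — 3 statements merged into one kernel-verified Lean document; each statement's English description precedes it below -/
import Mathlib

section
/- If H is an n×n real symmetric positive semidefinite matrix with H_ii = 1 for all i (so that every entry satisfies |H_ij| ≤ 1), then the matrix arcsin∘H − H is positive semidefinite, where (arcsin∘H)_ij = arcsin(H_ij) denotes the entrywise arcsine of H. -/
/-!
Integrating the binomial series of `(1 - x²)^(-1/2)` gives `arcsin x - x = ∑_{k ≥ 1} c_k x^(2k+1)`
with every `c_k ≥ 0`. By the Schur product theorem every entrywise power of a positive
semidefinite matrix is positive semidefinite, so for `0 ≤ c < 1` the entrywise series for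
`arcsin∘(cH) - cH` is a convergent sum of positive semidefinite matrices. Unit diagonal forces
`|H i j| ≤ 1`, so `arcsin∘(cH) - cH` tends to `arcsin∘H - H` as `c → 1`, and the positive
semidefinite cone is closed.
-/

open Matrix

open Set Filter

theorem Ring.multichoose_nonneg {r : ℝ} (hr : 0 < r) (k : ℕ) : 0 ≤ Ring.multichoose r k := by
  have h := Ring.factorial_nsmul_multichoose_eq_ascPochhammer r k
  rw [Polynomial.ascPochhammer_smeval_eq_eval, nsmul_eq_mul] at h
  have hpos := h ▸ ascPochhammer_pos k r hr
  exact (pos_of_mul_pos_right hpos (Nat.cast_nonneg _)).le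

namespace Real

theorem hasSum_one_div_sqrt_one_sub {x : ℝ} (hx : |x| < 1) :
    HasSum (fun k : ℕ => Ring.multichoose (1 / 2 : ℝ) k * x ^ k) (1 / √(1 - x)) := by
  have h := (one_div_one_sub_rpow_hasFPowerSeriesOnBall_zero (1 / 2 : ℝ)).hasSum
    (y := x) (by simpa [enorm_eq_ofReal_abs] using hx)
  simpa [FormalMultilinearSeries.ofScalars_apply_eq, sqrt_eq_rpow, mul_comm,
    Ring.multichoose_eq] using h

theorem hasSum_one_div_sqrt_one_sub_sq {x : ℝ} (hx : |x| < 1) :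
    HasSum (fun k : ℕ => Ring.multichoose (1 / 2 : ℝ) k * x ^ (2 * k)) (1 / √(1 - x ^ 2)) := by
  simpa [pow_mul] using hasSum_one_div_sqrt_one_sub (x := x ^ 2) (by
    rw [abs_pow]; exact pow_lt_one₀ (abs_nonneg x) hx two_ne_zero)

noncomputable def arcsinCoeff (k : ℕ) : ℝ := Ring.multichoose (1 / 2 : ℝ) k / (2 * k + 1)

theorem arcsinCoeff_nonneg (k : ℕ) : 0 ≤ arcsinCoeff k :=
  div_nonneg (Ring.multichoose_nonneg one_half_pos k) (by positivity)

@[simp] theorem arcsinCoeff_zero : arcsinCoeff 0 = 1 := by simp [arcsinCoeff]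

theorem hasDerivAt_arcsinCoeff_mul_pow (k : ℕ) (x : ℝ) :
    HasDerivAt (fun y => arcsinCoeff k * y ^ (2 * k + 1))
      (Ring.multichoose (1 / 2 : ℝ) k * x ^ (2 * k)) x := by
  refine ((hasDerivAt_pow (2 * k + 1) x).const_mul (arcsinCoeff k)).congr_deriv ?_
  rw [arcsinCoeff, Nat.add_sub_cancel]
  push_cast
  field_simp

theorem summable_arcsinCoeff_mul_pow {x : ℝ} (hx : |x| < 1) :
    Summable fun k : ℕ => arcsinCoeff k * x ^ (2 * k + 1) := by
  refine (hasSum_one_div_sqrt_one_sub_sq hx).summable.norm.of_norm_bounded fun k => ?_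
  have hb := Ring.multichoose_nonneg one_half_pos k
  simp only [norm_mul, norm_pow, norm_eq_abs, abs_of_nonneg (arcsinCoeff_nonneg k),
    abs_of_nonneg hb, pow_succ]
  gcongr
  · exact div_le_self hb (by linarith [k.cast_nonneg (α := ℝ)])
  · exact mul_le_of_le_one_right (by positivity) hx.le

theorem hasDerivAt_tsum_arcsinCoeff_mul_pow {x : ℝ} (hx : |x| < 1) :
    HasDerivAt (fun y => ∑' k : ℕ, arcsinCoeff k * y ^ (2 * k + 1)) (1 / √(1 - x ^ 2)) x := by
  obtain ⟨r, hxr, hr₁⟩ := exists_between hx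
  have hr₀ : 0 < r := (abs_nonneg x).trans_lt hxr
  have hr : |r| < 1 := by rwa [abs_of_pos hr₀]
  have hbound (k : ℕ) (y : ℝ) (hy : y ∈ Ioo (-r) r) :
      ‖Ring.multichoose (1 / 2 : ℝ) k * y ^ (2 * k)‖ ≤
        Ring.multichoose (1 / 2 : ℝ) k * r ^ (2 * k) := by
    rw [norm_mul, norm_pow, norm_eq_abs, norm_eq_abs,
      abs_of_nonneg (Ring.multichoose_nonneg one_half_pos k)]
    exact mul_le_mul_of_nonneg_left (pow_le_pow_left₀ (abs_nonneg y) (abs_lt.2 hy).le _)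
      (Ring.multichoose_nonneg one_half_pos k)
  rw [← (hasSum_one_div_sqrt_one_sub_sq hx).tsum_eq]
  exact hasDerivAt_tsum_of_isPreconnected (hasSum_one_div_sqrt_one_sub_sq hr).summable isOpen_Ioo
    isPreconnected_Ioo (fun k y _ => hasDerivAt_arcsinCoeff_mul_pow k y) hbound
    (y₀ := 0) ⟨by linarith, hr₀⟩ (by simp) (abs_lt.1 hxr)

theorem arcsin_eq_tsum {x : ℝ} (hx : |x| < 1) :
    arcsin x = ∑' k : ℕ, arcsinCoeff k * x ^ (2 * k + 1) := by
  have hderiv {y : ℝ} (hy : y ∈ Ioo (-1) 1) : HasDerivAt arcsin (1 / √(1 - y ^ 2)) y :=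
    hasDerivAt_arcsin (by linarith [hy.1]) (by linarith [hy.2])
  have hderiv' {y : ℝ} (hy : y ∈ Ioo (-1) 1) := hasDerivAt_tsum_arcsinCoeff_mul_pow (abs_lt.2 hy)
  refine isOpen_Ioo.eqOn_of_deriv_eq isPreconnected_Ioo
    (fun y hy => (hderiv hy).differentiableAt.differentiableWithinAt)
    (fun y hy => (hderiv' hy).differentiableAt.differentiableWithinAt)
    (fun y hy => (hderiv hy).deriv.trans (hderiv' hy).deriv.symm)
    (x := 0) (by norm_num) (by simp) (abs_lt.1 hx)

theorem hasSum_arcsin {x : ℝ} (hx : |x| < 1) :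
    HasSum (fun k : ℕ => arcsinCoeff k * x ^ (2 * k + 1)) (arcsin x) :=
  arcsin_eq_tsum hx ▸ (summable_arcsinCoeff_mul_pow hx).hasSum

theorem hasSum_arcsin_sub_self {x : ℝ} (hx : |x| < 1) :
    HasSum (fun k : ℕ => arcsinCoeff (k + 1) * x ^ (2 * (k + 1) + 1)) (arcsin x - x) := by
  simpa using (hasSum_nat_add_iff' 1).2 (hasSum_arcsin hx)

end Real

namespace Matrix

variable {n R : Type*}

section Topology

variable [Ring R] [PartialOrder R] [StarRing R] [TopologicalSpace R] [IsTopologicalRing R]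
  [ContinuousStar R] [OrderClosedTopology R]

theorem isClosed_setOf_posSemidef :
    IsClosed {M : Matrix n n R | M.PosSemidef} := by
  simp only [PosSemidef, IsHermitian, ofPred_and, ofPred_forall]
  refine (isClosed_eq (by fun_prop) continuous_id).inter
    (isClosed_iInter fun x => isClosed_le continuous_const ?_)
  simp only [Finsupp.sum]
  fun_prop

theorem posSemidef_of_hasSum [AddLeftMono R] {ι : Type*} {M : ι → Matrix n n R}
    {A : Matrix n n R} (hA : HasSum M A) (hM : ∀ i, (M i).PosSemidef) : A.PosSemidef :=
  isClosed_setOf_posSemidef.mem_of_tendsto hA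
    (Eventually.of_forall fun s => posSemidef_sum s fun i _ => hM i)

end Topology

open scoped ComplexOrder in
theorem PosSemidef.map_pow [Finite n] {𝕜 : Type*} [RCLike 𝕜] {A : Matrix n n 𝕜}
    (hA : A.PosSemidef) : ∀ k : ℕ, (A.map (· ^ k)).PosSemidef
  | 0 => by
    have h : A.map (· ^ 0) = vecMulVec (fun _ => 1) (star fun _ => 1) := by ext; simp [vecMulVec]
    exact h ▸ posSemidef_vecMulVec_self_star _
  | k + 1 => by
    have h : A.map (· ^ (k + 1)) = A.map (· ^ k) ⊙ A := by ext; simp [pow_succ]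
    exact h ▸ (hA.map_pow k).hadamard hA

theorem PosSemidef.two_mul_abs_apply_le {A : Matrix n n ℝ} (hA : A.PosSemidef) (i j : n) :
    2 * |A i j| ≤ A i i + A j j := by
  have h := hA.submatrix ![i, j]
  have h₁ := h.dotProduct_mulVec_nonneg ![1, 1]
  have h₂ := h.dotProduct_mulVec_nonneg ![1, -1]
  have hsym : A j i = A i j := hA.isHermitian.apply i j
  simp [dotProduct, mulVec, Fin.sum_univ_two, hsym] at h₁ h₂
  rcases abs_choice (A i j) with h | h <;> rw [h] <;> linarith

variable [Finite n]

theorem posSemidef_map_of_hasSum_pow {ι : Type*} {f : ℝ → ℝ} {a : ι → ℝ} {e : ι → ℕ}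
    (ha : ∀ k, 0 ≤ a k) (hf : ∀ s, |s| < 1 → HasSum (fun k => a k * s ^ e k) (f s))
    {A : Matrix n n ℝ} (hA : A.PosSemidef) (hA₁ : ∀ i j, |A i j| < 1) :
    (A.map f).PosSemidef :=
  posSemidef_of_hasSum (M := fun k => a k • A.map (· ^ e k))
    (Pi.hasSum.2 fun i => Pi.hasSum.2 fun j => by simpa using hf _ (hA₁ i j))
    fun k => (hA.map_pow (e k)).smul (ha k)

theorem posSemidef_map_of_hasSum_pow_of_continuousOn {ι : Type*} {f : ℝ → ℝ} {a : ι → ℝ}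
    {e : ι → ℕ} (ha : ∀ k, 0 ≤ a k) (hf : ∀ s, |s| < 1 → HasSum (fun k => a k * s ^ e k) (f s))
    (hfc : ContinuousOn f (Icc (-1) 1)) {A : Matrix n n ℝ} (hA : A.PosSemidef)
    (hA₁ : ∀ i j, |A i j| ≤ 1) : (A.map f).PosSemidef := by
  set Φ : ℝ → Matrix n n ℝ := fun c => (c • A).map f
  have hentry (c : ℝ) (hc : 0 ≤ c) (i j : n) : |(c • A) i j| ≤ c := by
    rw [smul_apply, smul_eq_mul, abs_mul, abs_of_nonneg hc]
    exact mul_le_of_le_one_right hc (hA₁ i j)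
  have hΦ : ContinuousOn Φ (Icc 0 1) := by
    refine continuousOn_pi.2 fun i => continuousOn_pi.2 fun j => hfc.comp (by fun_prop) ?_
    intro c hc
    exact abs_le.1 ((hentry c hc.1 i j).trans hc.2)
  have hsub : Φ '' Ico 0 1 ⊆ {M | M.PosSemidef} := by
    rintro _ ⟨c, hc, rfl⟩
    exact posSemidef_map_of_hasSum_pow ha hf (hA.smul hc.1) fun i j =>
      (hentry c hc.1 i j).trans_lt hc.2
  rw [← closure_Ico zero_ne_one] at hΦ
  have h₁ : Φ 1 ∈ closure (Φ '' Ico 0 1) :=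
    hΦ.image_closure ⟨1, by simp [closure_Ico], rfl⟩
  simpa [Φ] using isClosed_setOf_posSemidef.closure_subset_iff.2 hsub h₁

end Matrix

/-- If `H` is symmetric PSD with unit diagonal, then the entrywise arcsine
matrix minus `H`, i.e. `arcsin∘H − H`, is positive semidefinite. -/
theorem arcsin_sub_posSemidef {n : ℕ} (H : Matrix (Fin n) (Fin n) ℝ)
    (hH : H.PosSemidef) (hdiag : ∀ i, H i i = 1) :
    ((Matrix.of fun i j => Real.arcsin (H i j)) - H).PosSemidef := by
  have hentry (i j : Fin n) : |H i j| ≤ 1 := by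
    linarith [hH.two_mul_abs_apply_le i j, hdiag i, hdiag j]
  have hmap : (Matrix.of fun i j => Real.arcsin (H i j)) - H =
      H.map (fun s => Real.arcsin s - s) := by
    ext i j
    simp
  rw [hmap]
  exact posSemidef_map_of_hasSum_pow_of_continuousOn (fun k => Real.arcsinCoeff_nonneg (k + 1))
    (fun _ => Real.hasSum_arcsin_sub_self) (by fun_prop) hH hentry
end

section
/- (Grothendieck's identity.) Let ρ ∈ [−1,1], let Z₁ and Z₂ be independent standard Gaussian real random variables, and set X = Z₁ and Y = ρ·Z₁ + √(1−ρ²)·Z₂, so that (X,Y) is a centered bivariate Gaussian pair with unit variances and correlation ρ. Then 𝔼[sgn(X)·sgn(Y)] = (2/π)·arcsin(ρ). -/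
open MeasureTheory ProbabilityTheory

noncomputable section

/-- The sign function: `sgn t = 1` if `t > 0`, else `-1`. -/
def signum (t : ℝ) : ℝ := if 0 < t then 1 else -1

/-!
Write `(Z₁, Z₂)` in polar coordinates `r • (cos θ, sin θ)`. The density of two independent
standard Gaussians is `(2π)⁻¹ e^{-r²/2}`, so for a function of the direction only the expectation
is the average over `θ ∈ (-π, π)`; the radial factor is `1` because the law has total mass `1`.
With `ρ = cos α`, `α = arccos ρ ∈ [0, π]`, we have
`sgn X · sgn Y = sgn (cos θ) · sgn (cos (θ - α))`, and the two signs disagree on a set of angles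
of length `2α`. The average is therefore `1 - 2α/π = (2/π) arcsin ρ`.
-/

open Real Set

lemma signum_of_pos {t : ℝ} (h : 0 < t) : signum t = 1 := if_pos h

lemma signum_of_neg {t : ℝ} (h : t < 0) : signum t = -1 := if_neg h.not_gt

lemma signum_mul_of_pos {r : ℝ} (hr : 0 < r) (t : ℝ) : signum (r * t) = signum t := by
  simp only [signum, mul_pos_iff_of_pos_left hr]

@[fun_prop]
lemma measurable_signum : Measurable signum :=
  Measurable.ite measurableSet_Ioi measurable_const measurable_const

lemma gaussianPDFReal_mul_gaussianPDFReal (x y : ℝ) :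
    gaussianPDFReal 0 1 x * gaussianPDFReal 0 1 y = (2 * π)⁻¹ * exp (-(x ^ 2 + y ^ 2) / 2) := by
  simp only [gaussianPDFReal, NNReal.coe_one, mul_one, sub_zero]
  rw [mul_mul_mul_comm, ← exp_add, ← mul_inv, mul_self_sqrt (by positivity)]
  ring_nf

lemma integral_gaussianReal_prod (F : ℝ × ℝ → ℝ) :
    ∫ p, F p ∂(gaussianReal 0 1).prod (gaussianReal 0 1) =
      ∫ p, (gaussianPDFReal 0 1 p.1 * gaussianPDFReal 0 1 p.2) * F p := by
  rw [gaussianReal_of_var_ne_zero 0 one_ne_zero, prod_withDensity (measurable_gaussianPDF 0 1)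
    (measurable_gaussianPDF 0 1), ← Measure.volume_eq_prod,
    integral_withDensity_eq_integral_toReal_smul (by fun_prop)
      (ae_of_all _ fun _ => ENNReal.mul_lt_top gaussianPDF_lt_top gaussianPDF_lt_top)]
  simp only [ENNReal.toReal_mul, toReal_gaussianPDF, smul_eq_mul]

lemma integral_gaussianReal_prod_eq_radial_mul_angular {F : ℝ × ℝ → ℝ}
    (hF : ∀ r : ℝ, 0 < r → ∀ p, F (r • p) = F p) :
    ∫ p, F p ∂(gaussianReal 0 1).prod (gaussianReal 0 1) =
      (∫ r in Ioi 0, r * exp (-r ^ 2 / 2)) * ((2 * π)⁻¹ * ∫ θ in -π..π, F (cos θ, sin θ)) := by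
  have hpolar : ∀ p ∈ polarCoord.target, p.1 • ((gaussianPDFReal 0 1 (polarCoord.symm p).1 *
      gaussianPDFReal 0 1 (polarCoord.symm p).2) * F (polarCoord.symm p)) =
        (p.1 * exp (-p.1 ^ 2 / 2)) * ((2 * π)⁻¹ * F (cos p.2, sin p.2)) := by
    rintro ⟨r, θ⟩ ⟨hr, -⟩
    have hsymm : polarCoord.symm (r, θ) = r • (cos θ, sin θ) := by simp
    rw [hsymm, hF r hr, Prod.smul_fst, Prod.smul_snd, smul_eq_mul, smul_eq_mul, smul_eq_mul,
      gaussianPDFReal_mul_gaussianPDFReal]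
    have hnorm : (r * cos θ) ^ 2 + (r * sin θ) ^ 2 = r ^ 2 := by
      linear_combination r ^ 2 * cos_sq_add_sin_sq θ
    rw [hnorm]
    ring
  rw [integral_gaussianReal_prod, ← integral_comp_polarCoord_symm,
    setIntegral_congr_fun polarCoord.open_target.measurableSet hpolar, polarCoord_target,
    Measure.volume_eq_prod,
    setIntegral_prod_mul (fun r => r * exp (-r ^ 2 / 2)) (fun θ => (2 * π)⁻¹ * F (cos θ, sin θ)),
    integral_const_mul,
    intervalIntegral.integral_of_le (by linarith [pi_pos]), integral_Ioc_eq_integral_Ioo]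

lemma integral_mul_exp_neg_sq_div_two_Ioi : ∫ r in Ioi 0, r * exp (-r ^ 2 / 2) = 1 := by
  have h := integral_gaussianReal_prod_eq_radial_mul_angular (F := fun _ => (1 : ℝ))
    (fun _ _ _ => rfl)
  rw [integral_const, probReal_univ, intervalIntegral.integral_const, smul_eq_mul, smul_eq_mul,
    mul_one, mul_one, sub_neg_eq_add, ← two_mul, inv_mul_cancel₀ (by positivity), mul_one] at h
  exact h.symm

theorem integral_gaussianReal_prod_of_homogeneous {F : ℝ × ℝ → ℝ}
    (hF : ∀ r : ℝ, 0 < r → ∀ p, F (r • p) = F p) :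
    ∫ p, F p ∂(gaussianReal 0 1).prod (gaussianReal 0 1) =
      (2 * π)⁻¹ * ∫ θ in -π..π, F (cos θ, sin θ) := by
  rw [integral_gaussianReal_prod_eq_radial_mul_angular hF, integral_mul_exp_neg_sq_div_two_Ioi,
    one_mul]

lemma intervalIntegrable_of_eqOn_Ioo {f : ℝ → ℝ} {a b c : ℝ} (hab : a ≤ b)
    (hf : EqOn f (fun _ => c) (Ioo a b)) : IntervalIntegrable f volume a b := by
  rw [intervalIntegrable_iff_integrableOn_Ioo_of_le hab]
  exact (integrableOn_const measure_Ioo_lt_top.ne).congr_fun hf.symm measurableSet_Ioo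

lemma intervalIntegral_eq_of_eqOn_Ioo {f : ℝ → ℝ} {a b c : ℝ} (hab : a ≤ b)
    (hf : EqOn f (fun _ => c) (Ioo a b)) : ∫ x in a..b, f x = (b - a) * c := by
  rw [intervalIntegral.integral_of_le hab, integral_Ioc_eq_integral_Ioo,
    setIntegral_congr_fun measurableSet_Ioo hf, setIntegral_const, volume_real_Ioo_of_le hab,
    smul_eq_mul]

lemma cos_neg_of_neg_pi_div_two_lt {x : ℝ} (hx : -(π + π / 2) < x) (hx' : x < -(π / 2)) :
    cos x < 0 := by
  rw [← cos_neg]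
  exact cos_neg_of_pi_div_two_lt_of_lt (by linarith) (by linarith)

lemma integral_signum_cos_mul_signum_cos_sub {α : ℝ} (h₀ : 0 ≤ α) (hπ : α ≤ π) :
    ∫ θ in -π..π, signum (cos θ) * signum (cos (θ - α)) = 2 * π - 4 * α := by
  set f : ℝ → ℝ := fun θ => signum (cos θ) * signum (cos (θ - α))
  have hper : Function.Periodic f (2 * π) := fun θ => by
    simp only [f, cos_add_two_pi, add_sub_right_comm]
  have hπ₀ := pi_pos
  have h₁ : EqOn f (fun _ => -1) (Ioo (-(π / 2)) (α - π / 2)) := fun θ ⟨h, h'⟩ => by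
    show signum (cos θ) * signum (cos (θ - α)) = _
    rw [signum_of_pos (cos_pos_of_mem_Ioo ⟨h, by linarith⟩),
      signum_of_neg (cos_neg_of_neg_pi_div_two_lt (by linarith) (by linarith)), one_mul]
  have h₂ : EqOn f (fun _ => 1) (Ioo (α - π / 2) (π / 2)) := fun θ ⟨h, h'⟩ => by
    show signum (cos θ) * signum (cos (θ - α)) = _
    rw [signum_of_pos (cos_pos_of_mem_Ioo ⟨by linarith, h'⟩),
      signum_of_pos (cos_pos_of_mem_Ioo ⟨by linarith, by linarith⟩), one_mul]
  have h₃ : EqOn f (fun _ => -1) (Ioo (π / 2) (α + π / 2)) := fun θ ⟨h, h'⟩ => by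
    show signum (cos θ) * signum (cos (θ - α)) = _
    rw [signum_of_neg (cos_neg_of_pi_div_two_lt_of_lt h (by linarith)),
      signum_of_pos (cos_pos_of_mem_Ioo ⟨by linarith, by linarith⟩), mul_one]
  have h₄ : EqOn f (fun _ => 1) (Ioo (α + π / 2) (π + π / 2)) := fun θ ⟨h, h'⟩ => by
    show signum (cos θ) * signum (cos (θ - α)) = _
    rw [signum_of_neg (cos_neg_of_pi_div_two_lt_of_lt (by linarith) h'),
      signum_of_neg (cos_neg_of_pi_div_two_lt_of_lt (by linarith) (by linarith)), neg_one_mul,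
      neg_neg]
  have i₁ := intervalIntegrable_of_eqOn_Ioo (by linarith) h₁
  have i₂ := intervalIntegrable_of_eqOn_Ioo (by linarith) h₂
  have i₃ := intervalIntegrable_of_eqOn_Ioo (by linarith) h₃
  have i₄ := intervalIntegrable_of_eqOn_Ioo (by linarith) h₄
  -- on the period `[-π/2, 3π/2]` the sign of `cos θ` is constant on each half, so no case split
  -- on `α` is needed
  calc ∫ θ in -π..π, f θ = ∫ θ in -(π / 2)..-(π / 2) + 2 * π, f θ := by
        rw [← hper.intervalIntegral_add_eq (-π) (-(π / 2))]; ring_nf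
    _ = 2 * π - 4 * α := by
        rw [show -(π / 2) + 2 * π = π + π / 2 by ring,
          ← intervalIntegral.integral_add_adjacent_intervals (i₁.trans i₂) (i₃.trans i₄),
          ← intervalIntegral.integral_add_adjacent_intervals i₁ i₂,
          ← intervalIntegral.integral_add_adjacent_intervals i₃ i₄,
          intervalIntegral_eq_of_eqOn_Ioo (by linarith) h₁,
          intervalIntegral_eq_of_eqOn_Ioo (by linarith) h₂,
          intervalIntegral_eq_of_eqOn_Ioo (by linarith) h₃,
          intervalIntegral_eq_of_eqOn_Ioo (by linarith) h₄]
        ring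

/-- **Grothendieck's identity.** If `Z₁, Z₂` are independent standard Gaussians,
`X = Z₁` and `Y = ρ·Z₁ + √(1−ρ²)·Z₂` with `ρ ∈ [−1,1]`, then
`𝔼[sgn(X)·sgn(Y)] = (2/π)·arcsin ρ`. -/
theorem grothendieck_identity {Ω : Type*} [MeasurableSpace Ω]
    (P : Measure Ω) [IsProbabilityMeasure P]
    (ρ : ℝ) (hρ : ρ ∈ Set.Icc (-1 : ℝ) 1)
    (Z₁ Z₂ : Ω → ℝ) (hZ₁m : Measurable Z₁) (hZ₂m : Measurable Z₂)
    (hZ₁ : P.map Z₁ = gaussianReal 0 1) (hZ₂ : P.map Z₂ = gaussianReal 0 1)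
    (hindep : IndepFun Z₁ Z₂ P)
    (X Y : Ω → ℝ) (hX : X = Z₁)
    (hY : Y = fun ω => ρ * Z₁ ω + Real.sqrt (1 - ρ ^ 2) * Z₂ ω) :
    ∫ ω, signum (X ω) * signum (Y ω) ∂P = (2 / Real.pi) * Real.arcsin ρ := by
  subst X Y
  set F : ℝ × ℝ → ℝ := fun p => signum p.1 * signum (ρ * p.1 + √(1 - ρ ^ 2) * p.2)
  have hlaw : P.map (fun ω => (Z₁ ω, Z₂ ω)) = (gaussianReal 0 1).prod (gaussianReal 0 1) := by
    rw [(indepFun_iff_map_prod_eq_prod_map_map hZ₁m.aemeasurable hZ₂m.aemeasurable).1 hindep,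
      hZ₁, hZ₂]
  have hF : ∀ r : ℝ, 0 < r → ∀ p, F (r • p) = F p := fun r hr p => by
    have hlin : ρ * (r * p.1) + √(1 - ρ ^ 2) * (r * p.2) =
        r * (ρ * p.1 + √(1 - ρ ^ 2) * p.2) := by
      ring
    simp only [F, Prod.smul_fst, Prod.smul_snd, smul_eq_mul]
    rw [hlin, signum_mul_of_pos hr, signum_mul_of_pos hr]
  have hangle : ∀ θ, F (cos θ, sin θ) = signum (cos θ) * signum (cos (θ - arccos ρ)) := fun θ => by
    show signum (cos θ) * signum (ρ * cos θ + √(1 - ρ ^ 2) * sin θ) = _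
    rw [cos_sub, cos_arccos hρ.1 hρ.2, sin_arccos, mul_comm (cos θ), mul_comm (sin θ)]
  calc ∫ ω, signum (Z₁ ω) * signum (ρ * Z₁ ω + √(1 - ρ ^ 2) * Z₂ ω) ∂P
      = ∫ p, F p ∂P.map (fun ω => (Z₁ ω, Z₂ ω)) :=
        (integral_map (hZ₁m.prodMk hZ₂m).aemeasurable
          (by simp only [F]; fun_prop : Measurable F).aestronglyMeasurable).symm
    _ = (2 * π)⁻¹ * (2 * π - 4 * arccos ρ) := by
        rw [hlaw, integral_gaussianReal_prod_of_homogeneous hF, funext hangle,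
          integral_signum_cos_mul_signum_cos_sub (arccos_nonneg ρ) (arccos_le_pi ρ)]
    _ = 2 / π * arcsin ρ := by
        rw [arcsin_eq_pi_div_two_sub_arccos]
        field_simp
        ring

end
end

section
/- If A and B are n×n real symmetric positive semidefinite matrices, then every eigenvalue of the product A·B (i.e. every complex root of its characteristic polynomial) is a nonnegative real number. -/
open Matrix Polynomial
open scoped ComplexOrder MatrixOrder

/-
Write `A = Dᴴ D`. Then `A B = Dᴴ (D B)` has the same characteristic polynomial as `D B Dᴴ`,
which is again positive semidefinite. The characteristic polynomial of a Hermitian matrix is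
`∏ i, (X - λᵢ)` over its real eigenvalues `λᵢ`, and these are nonnegative when the matrix is
positive semidefinite.
-/

namespace Matrix

variable {n : Type*} [Fintype n] [DecidableEq n]

theorem PosSemidef.exists_posSemidef_charpoly_mul_eq {𝕜 : Type*} [RCLike 𝕜]
    {A B : Matrix n n 𝕜} (hA : A.PosSemidef) (hB : B.PosSemidef) :
    ∃ C : Matrix n n 𝕜, C.PosSemidef ∧ (A * B).charpoly = C.charpoly := by
  obtain ⟨D, rfl⟩ := CStarAlgebra.nonneg_iff_eq_star_mul_self.mp hA.nonneg
  refine ⟨D * B * Dᴴ, hB.mul_mul_conjTranspose_same D, ?_⟩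
  rw [mul_assoc, charpoly_mul_comm, star_eq_conjTranspose]

theorem IsHermitian.exists_eigenvalue_eq_of_isRoot_charpoly_map {𝕜 K : Type*} [RCLike 𝕜]
    [Field K] [Algebra 𝕜 K] {C : Matrix n n 𝕜} (hC : C.IsHermitian) {μ : K}
    (hμ : (C.charpoly.map (algebraMap 𝕜 K)).IsRoot μ) :
    ∃ i, μ = algebraMap 𝕜 K (hC.eigenvalues i) := by
  simpa [hC.charpoly_eq, Polynomial.map_prod, eval_prod, Finset.prod_eq_zero_iff, sub_eq_zero]
    using hμ

end Matrix

/-- If `A` and `B` are real symmetric positive semidefinite matrices, then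
every complex root of the characteristic polynomial of `A·B` is a nonnegative real number. -/
theorem eigenvalues_product_psd_nonneg {n : ℕ}
    (A B : Matrix (Fin n) (Fin n) ℝ) (hA : A.PosSemidef) (hB : B.PosSemidef)
    (μ : ℂ) (hμ : (((A * B).charpoly).map (algebraMap ℝ ℂ)).IsRoot μ) :
    μ.im = 0 ∧ 0 ≤ μ.re := by
  obtain ⟨C, hC, hAB⟩ := hA.exists_posSemidef_charpoly_mul_eq hB
  rw [hAB] at hμ
  obtain ⟨i, rfl⟩ := hC.isHermitian.exists_eigenvalue_eq_of_isRoot_charpoly_map hμ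
  exact ⟨Complex.ofReal_im _, hC.eigenvalues_nonneg i⟩
end
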